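/- Let (x, A) be a seed with x=(x_1,…,x_n,y_1,…,y_n), and fix an index k with 1 ≤ k ≤ n. Then seed mutation at k is an involution: μ_k(μ_k(x,A)) = (x,A). Concretely, writing μ_k(x,A) = ((x'_1,…,x'_n,y_1,…,y_n), μ_k A) with x'_i = x_i for i ≠ k, and applying the mutation rule at k again to the seed μ_k(x,A) (using the matrix μ_k A), the resulting element x''_k = (x'_k)^{-1}(∏_{i=1}^n (x'_i)^{[a'_{ik}]_+} ∏_{i=1}^n y_i^{[a'_{n+i,k}]_+} + ∏_{i=1}^n (x'_i)^{[-a'_{ik}]_+} ∏_{i=1}^n y_i^{[-a'_{n+i,k}]_+}) equals x_k, where (a'_{ij}) = μ_k A. -/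

import Mathlib

noncomputable section

/-- The ambient field `F`: the field of rational functions in `2n` variables over `ℚ`,
realized as the fraction field of the polynomial ring in the `2n` indeterminates
`x_1, …, x_n` (indexed by `Sum.inl`) and `y_1, …, y_n` (indexed by `Sum.inr`). -/
abbrev CField (n : ℕ) : Type := FractionRing (MvPolynomial (Fin n ⊕ Fin n) ℚ)

/-- Mutation of an integer matrix (rows indexed by `ρ`, columns by `Fin n`) at column `k`,
where `e : Fin n → ρ` identifies each column index with a row index.
`(μ_k A)_{ij} = -a_{ij}` if `i = k` or `j = k`, and
`(μ_k A)_{ij} = a_{ij} + a_{ik}[a_{kj}]_+ + [-a_{ik}]_+ a_{kj}` otherwise, where `[a]_+ = max a 0`. -/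
def matMutate {ρ : Type*} [DecidableEq ρ] {n : ℕ} (e : Fin n → ρ)
    (A : Matrix ρ (Fin n) ℤ) (k : Fin n) : Matrix ρ (Fin n) ℤ :=
  fun i j =>
    if i = e k ∨ j = k then -A i j
    else A i j + A i k * max (A (e k) j) 0 + max (-A i k) 0 * A (e k) j

/-- The mutated `2n`-tuple of the seed mutation at `k`:
`x'_i = x_i` for `i ≠ k`, the coefficients `y_i` are unchanged, and
`x'_k = x_k⁻¹ (∏ x_i^{[a_{ik}]_+} ∏ y_i^{[a_{n+i,k}]_+} + ∏ x_i^{[-a_{ik}]_+} ∏ y_i^{[-a_{n+i,k}]_+})`,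
where `[a]_+ = max a 0` (note `Int.toNat a = max a 0` as a natural number). -/
def seedMutX {n : ℕ} (x : Fin n ⊕ Fin n → CField n)
    (A : Matrix (Fin n ⊕ Fin n) (Fin n) ℤ) (k : Fin n) : Fin n ⊕ Fin n → CField n
  | Sum.inl i =>
      if i = k then
        (x (Sum.inl k))⁻¹ *
          ((∏ i' : Fin n, x (Sum.inl i') ^ (A (Sum.inl i') k).toNat) *
              (∏ i' : Fin n, x (Sum.inr i') ^ (A (Sum.inr i') k).toNat) +
            (∏ i' : Fin n, x (Sum.inl i') ^ (-(A (Sum.inl i') k)).toNat) *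
              (∏ i' : Fin n, x (Sum.inr i') ^ (-(A (Sum.inr i') k)).toNat))
      else x (Sum.inl i)
  | Sum.inr i => x (Sum.inr i)

/-!
Mutating the matrix twice adds the correction `a [b]_+ + [-a]_+ b` and then
`(-a) [-b]_+ + [a]_+ (-b)`, which cancel since `[a]_+ - [-a]_+ = a`.

For the variables, let `P = x^{[c]_+} + x^{[-c]_+}` be the exchange binomial of the column `c`
of `A` at `k`, so `x'_k = x_k⁻¹ P`. Skew-symmetrizability forces `a_kk = 0`, so `x_k` does not
occur in `P`, and mutation negates the column `c`, which leaves `P` unchanged. Hence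
`x''_k = (x_k⁻¹ P)⁻¹ P = x_k`, provided `P ≠ 0`: this holds because `P` is the value at the
algebraically independent `x` of a polynomial whose value at `(1, …, 1)` is `2`.
-/

section MatMutate

variable {ρ : Type*} [DecidableEq ρ] {n : ℕ}

theorem matMutate_apply_self_col (e : Fin n → ρ)
    (A : Matrix ρ (Fin n) ℤ) (k : Fin n) (i : ρ) : matMutate e A k i k = -A i k :=
  if_pos (Or.inr rfl)

theorem matMutate_apply_self_row (e : Fin n → ρ)
    (A : Matrix ρ (Fin n) ℤ) (k j : Fin n) : matMutate e A k (e k) j = -A (e k) j :=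
  if_pos (Or.inl rfl)

theorem matMutate_apply_of_not {e : Fin n → ρ}
    {A : Matrix ρ (Fin n) ℤ} {k : Fin n} {i : ρ} {j : Fin n} (h : ¬(i = e k ∨ j = k)) :
    matMutate e A k i j = A i j + A i k * max (A (e k) j) 0 + max (-A i k) 0 * A (e k) j :=
  if_neg h

theorem matMutate_involutive (e : Fin n → ρ) (k : Fin n) :
    Function.Involutive (matMutate e · k) := by
  intro A
  show matMutate e (matMutate e A k) k = A
  funext i j
  by_cases h : i = e k ∨ j = k
  · simp [matMutate, h]
  · rw [matMutate_apply_of_not h, matMutate_apply_of_not h, matMutate_apply_self_col,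
      matMutate_apply_self_row, neg_neg]
    linear_combination (A i k) * max_zero_sub_max_neg_zero_eq_self (A (e k) j) -
      (A (e k) j) * max_zero_sub_max_neg_zero_eq_self (A i k)

end MatMutate

section Monomial

variable {ι M : Type*} [Fintype ι]

/-- The monomial `x^{[c]_+}`; `Int.toNat` is the positive part `[·]_+`. -/
def posPartMonomial [CommMonoid M] (x : ι → M) (c : ι → ℤ) : M :=
  ∏ i, x i ^ (c i).toNat

def exchangeBinomial [CommSemiring M] (x : ι → M) (c : ι → ℤ) : M :=
  posPartMonomial x c + posPartMonomial x (-c)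

theorem posPartMonomial_update_of_eq_zero [CommMonoid M] [DecidableEq ι] (x : ι → M)
    {c : ι → ℤ} {j : ι} (hc : c j = 0) (v : M) :
    posPartMonomial (Function.update x j v) c = posPartMonomial x c := by
  refine Finset.prod_congr rfl fun i _ => ?_
  by_cases h : i = j
  · subst h; simp [hc]
  · rw [Function.update_of_ne h]

theorem exchangeBinomial_update_of_eq_zero [CommSemiring M] [DecidableEq ι] (x : ι → M)
    {c : ι → ℤ} {j : ι} (hc : c j = 0) (v : M) :
    exchangeBinomial (Function.update x j v) c = exchangeBinomial x c := by
  have hc' : (-c) j = 0 := by simp [hc]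
  simp only [exchangeBinomial, posPartMonomial_update_of_eq_zero x hc,
    posPartMonomial_update_of_eq_zero x hc']

theorem exchangeBinomial_neg [CommSemiring M] (x : ι → M) (c : ι → ℤ) :
    exchangeBinomial x (-c) = exchangeBinomial x c := by
  rw [exchangeBinomial, exchangeBinomial, neg_neg, add_comm]

theorem AlgebraicIndependent.exchangeBinomial_ne_zero {R A : Type*} [CommRing R] [CharZero R]
    [CommRing A] [Algebra R A] {x : ι → A} (hx : AlgebraicIndependent R x) (c : ι → ℤ) :
    exchangeBinomial x c ≠ 0 := by
  set p : MvPolynomial ι R := exchangeBinomial MvPolynomial.X c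
  have heval_one : MvPolynomial.eval (fun _ => (1 : R)) p = 2 := by
    norm_num [p, exchangeBinomial, posPartMonomial, one_add_one_eq_two]
  have hp : p ≠ 0 := fun h => by simp [h] at heval_one
  have haeval : MvPolynomial.aeval x p = exchangeBinomial x c := by
    simp [p, exchangeBinomial, posPartMonomial]
  rw [← haeval]
  exact fun h => hp (hx.eq_zero_of_aeval_eq_zero p h)

end Monomial

theorem seedMutX_eq_update {n : ℕ} (x : Fin n ⊕ Fin n → CField n)
    (A : Matrix (Fin n ⊕ Fin n) (Fin n) ℤ) (k : Fin n) :
    seedMutX x A k = Function.update x (Sum.inl k)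
      ((x (Sum.inl k))⁻¹ * exchangeBinomial x (A · k)) := by
  funext i
  rcases i with i | i
  · by_cases h : i = k
    · subst h
      simp [seedMutX, exchangeBinomial, posPartMonomial, Fintype.prod_sum_type]
    · simp [seedMutX, h]
  · simp [seedMutX]

theorem seedMutX_seedMutX {n : ℕ} (x : Fin n ⊕ Fin n → CField n)
    (A : Matrix (Fin n ⊕ Fin n) (Fin n) ℤ) (k : Fin n) (hAkk : A (Sum.inl k) k = 0)
    (hP : exchangeBinomial x (A · k) ≠ 0) :
    seedMutX (seedMutX x A k) (matMutate Sum.inl A k) k = x := by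
  have hcol : (matMutate Sum.inl A k · k) = -(A · k) :=
    funext (matMutate_apply_self_col Sum.inl A k)
  rw [seedMutX_eq_update (seedMutX x A k), hcol, exchangeBinomial_neg, seedMutX_eq_update x,
    exchangeBinomial_update_of_eq_zero x hAkk, Function.update_idem, Function.update_self,
    mul_inv, inv_inv, mul_assoc, inv_mul_cancel₀ hP, mul_one, Function.update_eq_self]

theorem seed_mutation_involutive_general {n : ℕ} (x : Fin n ⊕ Fin n → CField n)
    (A : Matrix (Fin n ⊕ Fin n) (Fin n) ℤ)
    (hindep : AlgebraicIndependent ℚ x)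
    (hskew : ∃ d : Fin n → ℤ, (∀ i, 0 < d i) ∧
      ∀ i j, A (Sum.inl i) j * d j = -A (Sum.inl j) i * d i)
    (k : Fin n) :
    matMutate Sum.inl (matMutate Sum.inl A k) k = A ∧
    seedMutX (seedMutX x A k) (matMutate Sum.inl A k) k = x := by
  obtain ⟨d, hd, hsk⟩ := hskew
  have hAkk : A (Sum.inl k) k = 0 := by nlinarith [hsk k k, hd k]
  exact ⟨matMutate_involutive Sum.inl k A,
    seedMutX_seedMutX x A k hAkk (hindep.exchangeBinomial_ne_zero _)⟩

/-- Seed mutation at `k` is an involution: applying the mutation rule at `k`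
twice to a seed `(x, A)` returns the seed `(x, A)` itself (both the matrix part and the
`2n`-tuple of cluster variables and coefficients). -/
theorem seed_mutation_involutive {n : ℕ} (x : Fin n ⊕ Fin n → CField n)
    (A : Matrix (Fin n ⊕ Fin n) (Fin n) ℤ)
    (hindep : AlgebraicIndependent ℚ x)
    (hgen : IntermediateField.adjoin ℚ (Set.range x) = ⊤)
    (hskew : ∃ d : Fin n → ℤ, (∀ i, 0 < d i) ∧
      ∀ i j, A (Sum.inl i) j * d j = -A (Sum.inl j) i * d i)
    (k : Fin n) :
    matMutate Sum.inl (matMutate Sum.inl A k) k = A ∧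
    seedMutX (seedMutX x A k) (matMutate Sum.inl A k) k = x :=
  seed_mutation_involutive_general x A hindep hskew k
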